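/- arXiv:2401.05629 — 3 statements merged into one kernel-verified Lean document; each statement's English description precedes it below -/
import Mathlib

section
/- If α : ℝ → ℝ is a class K function extended to ℝ (continuous, strictly increasing, α(0) = 0), and ψ : ℝ → ℝ is continuously differentiable and satisfies the differential inequality ψ'(t) ≥ -α(ψ(t)) for all t ≥ 0 with ψ(0) ≥ 0, then ψ(t) ≥ 0 for all t ≥ 0. -/
/-- Comparison lemma: if α is a continuous strictly increasing function with α(0) = 0,
ψ is C¹ on [0,∞) with ψ'(t) ≥ -α(ψ(t)) for t ≥ 0 and ψ(0) ≥ 0, then ψ(t) ≥ 0 for t ≥ 0. -/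
theorem stmt7 (α : ℝ → ℝ) (hαc : Continuous α) (hαm : StrictMono α) (hα0 : α 0 = 0)
    (ψ ψ' : ℝ → ℝ) (hd : ∀ t ≥ 0, HasDerivAt ψ (ψ' t) t)
    (hc : ContinuousOn ψ' (Set.Ici 0))
    (hineq : ∀ t ≥ 0, ψ' t ≥ -α (ψ t)) (h0 : ψ 0 ≥ 0) :
    ∀ t ≥ 0, ψ t ≥ 0 := by
  have hψc : ContinuousOn ψ (Set.Ici 0) := fun t ht =>
    ((hd t ht).continuousAt).continuousWithinAt
  by_contra h
  push_neg at h
  obtain ⟨t₁, ht₁0, ht₁⟩ := h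
  have ht₁pos : 0 < t₁ := by
    rcases lt_or_eq_of_le ht₁0 with h' | h'
    · exact h'
    · exact absurd ht₁ (by rw [← h']; linarith)
  set S : Set ℝ := Set.Icc (0:ℝ) t₁ ∩ ψ ⁻¹' Set.Ici 0 with hS
  have hSne : S.Nonempty := ⟨0, ⟨le_refl 0, le_of_lt ht₁pos⟩, h0⟩
  have hSbdd : BddAbove S := ⟨t₁, fun x hx => hx.1.2⟩
  have hSclosed : IsClosed S :=
    (hψc.mono (fun x hx => hx.1)).preimage_isClosed_of_isClosed isClosed_Icc isClosed_Ici
  set s := sSup S with hs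
  have hsS : s ∈ S := hSclosed.csSup_mem hSne hSbdd
  have hs0 : (0:ℝ) ≤ s := hsS.1.1
  have hst₁ : s ≤ t₁ := hsS.1.2
  have hψs : ψ s ≥ 0 := hsS.2
  have hslt : s < t₁ := lt_of_le_of_ne hst₁ (fun he => absurd hψs (by rw [he]; linarith))
  -- ψ < 0 on (s, t₁]
  have hneg : ∀ t, s < t → t ≤ t₁ → ψ t < 0 := by
    intro t hst htt₁
    by_contra hcon
    push_neg at hcon
    have : t ∈ S := ⟨⟨le_trans hs0 (le_of_lt hst), htt₁⟩, hcon⟩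
    exact absurd (le_csSup hSbdd this) (not_le.mpr hst)
  -- MVT on [s, t₁]
  obtain ⟨c, hc1, hc2⟩ := exists_hasDerivAt_eq_slope ψ ψ' hslt
    (hψc.mono (fun x hx => le_trans hs0 hx.1))
    (fun x hx => hd x (le_trans hs0 (le_of_lt hx.1)))
  have hcψneg : ψ c < 0 := hneg c hc1.1 (le_of_lt hc1.2)
  have hc0 : (0:ℝ) ≤ c := le_trans hs0 (le_of_lt hc1.1)
  have hαneg : α (ψ c) < 0 := by
    have := hαm hcψneg
    rwa [hα0] at this
  have hpos : 0 < ψ' c := lt_of_lt_of_le (by linarith) (hineq c hc0)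
  rw [hc2] at hpos
  have hnum : ψ t₁ - ψ s < 0 := by linarith
  have := div_neg_of_neg_of_pos hnum (by linarith : (0:ℝ) < t₁ - s)
  linarith
end

section
/- Let b : ℝⁿ → ℝ and define ψ₀ = b and ψᵢ(x(t)) via ψᵢ = ψ̇_{i-1} + αᵢ(ψ_{i-1}) along a trajectory x(t). If for each i the function t ↦ ψ_{i-1}(x(t)) is C¹, ψ_{i-1}(x(0)) ≥ 0, and d/dt ψ_{i-1}(x(t)) ≥ -αᵢ(ψ_{i-1}(x(t))) for all t ≥ 0 with αᵢ class K extended to ℝ, then ψ_{i-1}(x(t)) ≥ 0 for all t ≥ 0 and all i = 1, …, m; i.e., the set ∩ᵢ Dᵢ = ∩ᵢ {x : ψ_{i-1}(x) ≥ 0} is forward invariant. -/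
/-- HOCBF forward invariance along a trajectory: if each ψ_{i} (i < m) is C¹ in time,
nonnegative at 0, satisfies ψᵢ' ≥ -α_{i+1}(ψᵢ), where ψ_{i+1} = ψᵢ' + α_{i+1}(ψᵢ) and each
α is class K extended to ℝ, then ψᵢ(t) ≥ 0 for all t ≥ 0 and all i < m. -/
theorem stmt8 (m : ℕ) (ψ ψ' : ℕ → ℝ → ℝ) (α : ℕ → ℝ → ℝ)
    (hαc : ∀ i, Continuous (α i)) (hαm : ∀ i, StrictMono (α i)) (hα0 : ∀ i, α i 0 = 0)
    (hd : ∀ i < m, ∀ t, 0 ≤ t → HasDerivAt (ψ i) (ψ' i t) t)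
    (hc : ∀ i < m, ContinuousOn (ψ' i) (Set.Ici 0))
    (hrec : ∀ i < m, ∀ t, 0 ≤ t → ψ (i + 1) t = ψ' i t + α (i + 1) (ψ i t))
    (h0 : ∀ i < m, ψ i 0 ≥ 0)
    (hineq : ∀ i < m, ∀ t, 0 ≤ t → ψ' i t ≥ -α (i + 1) (ψ i t)) :
    ∀ i < m, ∀ t, 0 ≤ t → ψ i t ≥ 0 := by
  intro i hi
  by_contra h
  push_neg at h
  obtain ⟨t₁, ht₁, hneg⟩ := h
  have hcont : ContinuousOn (ψ i) (Set.Ici 0) := fun t ht =>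
    ((hd i hi t ht).continuousAt).continuousWithinAt
  set S := Set.Icc (0 : ℝ) t₁ ∩ (ψ i) ⁻¹' Set.Ici 0 with hS
  have hSne : S.Nonempty := ⟨0, ⟨le_refl 0, ht₁⟩, h0 i hi⟩
  have hSbdd : BddAbove S := ⟨t₁, fun t ht => ht.1.2⟩
  have hSclosed : IsClosed S := by
    apply ContinuousOn.preimage_isClosed_of_isClosed
      (hcont.mono (fun t ht => ht.1)) isClosed_Icc isClosed_Ici
  set t₀ := sSup S with ht₀
  have ht₀S : t₀ ∈ S := hSclosed.csSup_mem hSne hSbdd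
  have ht₀0 : (0:ℝ) ≤ t₀ := ht₀S.1.1
  have ht₀ψ : 0 ≤ ψ i t₀ := ht₀S.2
  have ht₀lt : t₀ < t₁ := lt_of_le_of_ne ht₀S.1.2 (by
    intro heq; rw [heq] at ht₀ψ; linarith)
  have hmid : ∀ t ∈ Set.Ioo t₀ t₁, ψ i t < 0 := by
    intro t ht
    by_contra hcon
    push_neg at hcon
    have : t ∈ S := ⟨⟨le_trans ht₀0 ht.1.le, ht.2.le⟩, hcon⟩
    exact absurd (le_csSup hSbdd this) (not_le.mpr ht.1)
  have hmono : StrictMonoOn (ψ i) (Set.Icc t₀ t₁) := by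
    apply StrictMonoOn.mono (s := Set.Icc t₀ t₁) ?_ le_rfl
    apply strictMonoOn_of_deriv_pos (convex_Icc t₀ t₁)
      (hcont.mono (fun t ht => le_trans ht₀0 ht.1))
    intro t ht
    rw [interior_Icc] at ht
    have htpos : (0:ℝ) ≤ t := le_trans ht₀0 ht.1.le
    have hderiv : deriv (ψ i) t = ψ' i t := (hd i hi t htpos).deriv
    rw [hderiv]
    have h1 : α (i + 1) (ψ i t) < α (i + 1) 0 := hαm (i + 1) (hmid t ht)
    rw [hα0] at h1
    have := hineq i hi t htpos
    linarith
  have := hmono ⟨le_rfl, ht₀lt.le⟩ ⟨ht₀lt.le, le_rfl⟩ ht₀lt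
  linarith
end

section
/- If α : ℝ → ℝ is locally Lipschitz, strictly increasing, and α(0) = 0, and ψ : [0, ∞) → ℝ is C¹ with ψ(0) > 0 and ψ'(t) ≥ -α(ψ(t)), then ψ(t) > 0 for all t ≥ 0 (strict positivity is preserved). -/
/-! Suppose ψ reaches 0 and let t₀ be its first zero. Near the origin α is Lipschitz, say with
constant K, and α(0) = 0, so α(y) ≤ K y for small y > 0. Just before t₀ the function ψ is small
and positive, hence ψ' ≥ -K ψ there, which makes ψ(t) e^{K t} nondecreasing. That is impossible
on an interval [s, t₀] with ψ(s) > 0 = ψ(t₀). -/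

open Set Filter Topology

theorem LocallyLipschitz.exists_eventually_norm_le {E F : Type*} [SeminormedAddCommGroup E]
    [SeminormedAddCommGroup F] {f : E → F} (hf : LocallyLipschitz f) (h0 : f 0 = 0) :
    ∃ K : NNReal, ∀ᶠ y in 𝓝 0, ‖f y‖ ≤ K * ‖y‖ := by
  obtain ⟨K, U, hU, hK⟩ := hf 0
  refine ⟨K, eventually_of_mem hU fun y hy => ?_⟩
  simpa only [dist_zero_right, h0] using hK.dist_le_mul y hy 0 (mem_of_mem_nhds hU)

theorem exists_first_zero_of_pos_of_nonpos {f : ℝ → ℝ} {a b : ℝ} (hab : a ≤ b)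
    (hf : ContinuousOn f (Icc a b)) (ha : 0 < f a) (hb : f b ≤ 0) :
    ∃ c ∈ Ioc a b, f c = 0 ∧ ∀ u ∈ Ico a c, 0 < f u := by
  set S := Icc a b ∩ f ⁻¹' Iic 0
  have hS : IsCompact S :=
    isCompact_Icc.of_isClosed_subset (hf.preimage_isClosed_of_isClosed isClosed_Icc isClosed_Iic)
      inter_subset_left
  have hcS : sInf S ∈ S := hS.sInf_mem ⟨b, ⟨hab, le_rfl⟩, hb⟩
  set c := sInf S
  obtain ⟨⟨hac, hcb⟩, hfc⟩ := hcS
  have hpos : ∀ u ∈ Ico a c, 0 < f u := fun u ⟨hau, huc⟩ => by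
    by_contra! hfu
    exact (csInf_le hS.bddBelow ⟨⟨hau, huc.le.trans hcb⟩, hfu⟩).not_gt huc
  have hac' : a < c := hac.lt_of_ne fun h => (h ▸ ha).not_ge hfc
  obtain ⟨z, ⟨haz, hzc⟩, hfz⟩ :=
    intermediate_value_Icc' hac (hf.mono (Icc_subset_Icc_right hcb)) ⟨hfc, ha.le⟩
  have hz : z = c := hzc.antisymm (by_contra fun h => (hpos z ⟨haz, not_le.1 h⟩).ne' hfz)
  exact ⟨c, ⟨hac', hcb⟩, hz ▸ hfz, hpos⟩

theorem monotoneOn_mul_exp_of_neg_mul_le_deriv {f f' : ℝ → ℝ} {D : Set ℝ} (K : ℝ)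
    (hD : Convex ℝ D) (hf : ContinuousOn f D) (hf' : ∀ x ∈ interior D, HasDerivAt f (f' x) x)
    (hbound : ∀ x ∈ interior D, -K * f x ≤ f' x) :
    MonotoneOn (fun x => f x * Real.exp (K * x)) D := by
  have hderiv : ∀ x ∈ interior D, HasDerivAt (fun x => f x * Real.exp (K * x))
      ((f' x + K * f x) * Real.exp (K * x)) x := fun x hx => by
    have hexp : HasDerivAt (fun x => Real.exp (K * x)) (Real.exp (K * x) * K) x := by
      simpa using ((hasDerivAt_id x).const_mul K).exp
    exact ((hf' x hx).mul hexp).congr_deriv (by ring)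
  refine monotoneOn_of_deriv_nonneg hD
    (hf.mul (Real.continuous_exp.comp (continuous_const_mul K)).continuousOn)
    (fun x hx => (hderiv x hx).differentiableAt.differentiableWithinAt) fun x hx => ?_
  rw [(hderiv x hx).deriv]
  have : 0 ≤ f' x + K * f x := by linarith [hbound x hx]
  positivity

theorem stmt17_general (α : ℝ → ℝ) (hlip : LocallyLipschitz α) (h0 : α 0 = 0)
    (ψ ψ' : ℝ → ℝ) (hd : ∀ t ≥ 0, HasDerivAt ψ (ψ' t) t)
    (hψ0 : 0 < ψ 0) (hineq : ∀ t ≥ 0, ψ' t ≥ -α (ψ t)) :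
    ∀ t ≥ 0, 0 < ψ t := by
  intro t ht
  by_contra! hneg
  have hψc : ContinuousOn ψ (Ici 0) := fun u hu => (hd u hu).continuousAt.continuousWithinAt
  obtain ⟨t₀, ⟨ht₀, -⟩, hzero, hpos⟩ :=
    exists_first_zero_of_pos_of_nonpos ht (hψc.mono Icc_subset_Ici_self) hψ0 hneg
  obtain ⟨K, hK⟩ := hlip.exists_eventually_norm_le h0
  have hψt₀ : Tendsto ψ (𝓝 t₀) (𝓝 0) := hzero ▸ (hd t₀ ht₀.le).continuousAt.tendsto
  obtain ⟨l, r, ⟨hlt₀, ht₀r⟩, hl⟩ := mem_nhds_iff_exists_Ioo_subset.1 (hψt₀.eventually hK)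
  set s := max l 0
  have hs0 : 0 ≤ s := le_max_right l 0
  have hst₀ : s < t₀ := max_lt hlt₀ ht₀
  have hψ'_ge : ∀ u ∈ interior (Icc s t₀), -K * ψ u ≤ ψ' u := fun u hu => by
    rw [interior_Icc] at hu
    have hu0 : 0 ≤ u := hs0.trans hu.1.le
    have hαu : ‖α (ψ u)‖ ≤ K * ‖ψ u‖ := hl ⟨(le_max_left l 0).trans_lt hu.1, hu.2.trans ht₀r⟩
    rw [Real.norm_eq_abs, Real.norm_eq_abs, abs_of_pos (hpos u ⟨hu0, hu.2⟩)] at hαu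
    linarith [le_of_abs_le hαu, hineq u hu0]
  have hmono := monotoneOn_mul_exp_of_neg_mul_le_deriv K (convex_Icc s t₀)
    (hψc.mono fun u hu => hs0.trans hu.1)
    (fun u hu => hd u (hs0.trans (interior_subset hu : u ∈ Icc s t₀).1)) hψ'_ge
  have hst₀_le : ψ s * Real.exp (K * s) ≤ ψ t₀ * Real.exp (K * t₀) :=
    hmono (left_mem_Icc.2 hst₀.le) (right_mem_Icc.2 hst₀.le) hst₀.le
  rw [hzero, zero_mul] at hst₀_le
  exact (mul_pos (hpos s ⟨hs0, hst₀⟩) (Real.exp_pos _)).not_ge hst₀_le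

/-- If α is locally Lipschitz, strictly increasing with α(0) = 0, and ψ is C¹ on [0,∞)
with ψ(0) > 0 and ψ'(t) ≥ -α(ψ(t)), then ψ(t) > 0 for all t ≥ 0. -/
theorem stmt17 (α : ℝ → ℝ) (hlip : LocallyLipschitz α) (hm : StrictMono α) (h0 : α 0 = 0)
    (ψ ψ' : ℝ → ℝ) (hd : ∀ t ≥ 0, HasDerivAt ψ (ψ' t) t)
    (hc : ContinuousOn ψ' (Set.Ici 0))
    (hψ0 : 0 < ψ 0) (hineq : ∀ t ≥ 0, ψ' t ≥ -α (ψ t)) :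
    ∀ t ≥ 0, 0 < ψ t :=
  stmt17_general α hlip h0 ψ ψ' hd hψ0 hineq
end
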